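/- (Geometry-of-numbers bound) For every positive integer d there exists a constant C = C(d) such that the following holds. Let λ > 0 and X ≥ 1 be real, and let c₁, c₂, c₃ and X₁,…,X_d, Y₁,…,Y_d, Z₁,…,Z_d be positive integers that are admissible for (λ, X). Then B_d(c, X, Y, Z) ≤ C · (X^λ / P₁ + X^{λ-1}). -/

import Mathlib

/-- `dyadic x X` means `x ∈ [X, 2X)`. -/
def dyadic (x X : ℕ) : Prop := X ≤ x ∧ x < 2 * X

/-- `B d c₁ c₂ c₃ Xs Ys Zs` counts tuples `(x, y, z) ∈ ℕ^{3d}` with `x i ∼ Xs i`,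
`y i ∼ Ys i`, `z i ∼ Zs i`, satisfying `c₁ ∏ xᵢ^i + c₂ ∏ yᵢ^i = c₃ ∏ zᵢ^i` and
`gcd(c₁ ∏ xᵢ, c₂ ∏ yᵢ, c₃ ∏ zᵢ) = 1` (indices run through `1, …, d`). -/
noncomputable def B (d : ℕ) (c₁ c₂ c₃ : ℕ) (Xs Ys Zs : Fin d → ℕ) : ℕ :=
  Nat.card {t : (Fin d → ℕ) × (Fin d → ℕ) × (Fin d → ℕ) //
    (∀ i, dyadic (t.1 i) (Xs i)) ∧ (∀ i, dyadic (t.2.1 i) (Ys i)) ∧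
    (∀ i, dyadic (t.2.2 i) (Zs i)) ∧
    c₁ * ∏ i, t.1 i ^ (i.val + 1) + c₂ * ∏ i, t.2.1 i ^ (i.val + 1)
      = c₃ * ∏ i, t.2.2 i ^ (i.val + 1) ∧
    Nat.gcd (c₁ * ∏ i, t.1 i) (Nat.gcd (c₂ * ∏ i, t.2.1 i) (c₃ * ∏ i, t.2.2 i)) = 1}

/-- The parameters are admissible for `(lam, X)`: all are positive,
`∏ᵢ XᵢYᵢZᵢ ∈ [X^lam, 2X^lam)` and `max(∏ Xᵢ^i, ∏ Yᵢ^i, ∏ Zᵢ^i) ∈ [X, 2X)`. -/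
def Admissible (d : ℕ) (lam X : ℝ) (c₁ c₂ c₃ : ℕ) (Xs Ys Zs : Fin d → ℕ) : Prop :=
  0 < c₁ ∧ 0 < c₂ ∧ 0 < c₃ ∧
  (∀ i, 0 < Xs i) ∧ (∀ i, 0 < Ys i) ∧ (∀ i, 0 < Zs i) ∧
  X ^ lam ≤ ((∏ i, Xs i * Ys i * Zs i : ℕ) : ℝ) ∧
  ((∏ i, Xs i * Ys i * Zs i : ℕ) : ℝ) < 2 * X ^ lam ∧
  X ≤ ((max (∏ i, Xs i ^ (i.val + 1))
        (max (∏ i, Ys i ^ (i.val + 1)) (∏ i, Zs i ^ (i.val + 1))) : ℕ) : ℝ) ∧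
  ((max (∏ i, Xs i ^ (i.val + 1))
        (max (∏ i, Ys i ^ (i.val + 1)) (∏ i, Zs i ^ (i.val + 1))) : ℕ) : ℝ) < 2 * X


/-!
Fixing all coordinates but the first ones `x₁, y₁, z₁` turns the equation into a linear equation
`a x₁ + b y₁ = c z₁` whose three terms are pairwise coprime: each has the same prime factors as the
corresponding product in the gcd condition. If, say, `a X₁` is the largest of `a X₁, b Y₁, c Z₁`,
then any two solutions satisfy `y₁ z₁' ≡ y₁' z₁ (mod a)`. The points `(y₁, z₁)` being primitive,
their slopes `z₁ / y₁` are pairwise at least `a / (4 Y₁²)` apart, so there are at most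
`8 Y₁ Z₁ / a + 1 ≤ 16 P₁ / X + 1` of them. The other coordinates take at most
`∏ Pᵢ / P₁ < 2 X^λ / P₁` values.
-/

open Finset

theorem exists_add_card_sub_one_mul_le {α : Type*} [Ring α] [LinearOrder α] [IsOrderedRing α]
    {s : Finset α} {a g : α} (hs : s.Nonempty) (ha : ∀ x ∈ s, a ≤ x)
    (hsep : ∀ x ∈ s, ∀ y ∈ s, x < y → x + g ≤ y) :
    ∃ y ∈ s, a + ((#s : α) - 1) * g ≤ y := by
  induction s using Finset.induction_on_max with
  | empty => exact absurd hs not_nonempty_empty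
  | insert m t hlt ih =>
    rcases t.eq_empty_or_nonempty with rfl | ht
    · exact ⟨m, mem_singleton_self m, by simpa using ha m (mem_singleton_self m)⟩
    obtain ⟨y, hy, hay⟩ := ih ht (fun x hx => ha x (mem_insert_of_mem hx))
      fun x hx y hy => hsep x (mem_insert_of_mem hx) y (mem_insert_of_mem hy)
    have hym := hsep y (mem_insert_of_mem hy) m (mem_insert_self m t) (hlt y hy)
    refine ⟨m, mem_insert_self m t, ?_⟩
    rw [card_insert_of_notMem fun h => (hlt m h).false, Nat.cast_succ]
    calc a + ((#t : α) + 1 - 1) * g = a + ((#t : α) - 1) * g + g := by noncomm_ring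
      _ ≤ m := (add_le_add_left hay g).trans hym

theorem Nat.Coprime.eq_of_mul_eq_mul {a b c d : ℕ} (hab : a.Coprime b) (hcd : c.Coprime d)
    (h : a * d = c * b) : a = c ∧ b = d := by
  obtain rfl : a = c := Nat.dvd_antisymm
    (hab.dvd_of_dvd_mul_right ⟨d, by rw [h, mul_comm]⟩)
    (hcd.dvd_of_dvd_mul_right ⟨b, by rw [← h, mul_comm]⟩)
  rcases Nat.eq_zero_or_pos a with rfl | ha
  · simp_all [Nat.coprime_zero_left]
  · exact ⟨rfl, (Nat.eq_of_mul_eq_mul_left ha h).symm⟩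

theorem div_add_le_div_of_modEq {S γ p₁ p₂ q₁ q₂ : ℕ} (hp : dyadic p₁ S) (hq : dyadic q₁ S)
    (hmod : p₁ * q₂ ≡ p₂ * q₁ [MOD γ]) (hlt : (p₂ : ℝ) / p₁ < q₂ / q₁) :
    (p₂ : ℝ) / p₁ + γ / (4 * S ^ 2) ≤ q₂ / q₁ := by
  obtain ⟨hp₁, hp₂⟩ : (S : ℝ) ≤ p₁ ∧ (p₁ : ℝ) < 2 * S := by exact_mod_cast hp
  obtain ⟨hq₁, hq₂⟩ : (S : ℝ) ≤ q₁ ∧ (q₁ : ℝ) < 2 * S := by exact_mod_cast hq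
  have hS : (0 : ℝ) < S := by
    have : 0 < S := by unfold dyadic at hp; omega
    exact_mod_cast this
  have hp₀ := hS.trans_le hp₁
  have hq₀ := hS.trans_le hq₁
  have hlt' : p₂ * q₁ < p₁ * q₂ := by
    have := (div_lt_div_iff₀ hp₀ hq₀).1 hlt
    exact_mod_cast (by linarith : (p₂ : ℝ) * q₁ < p₁ * q₂)
  have hγ : (γ : ℝ) ≤ p₁ * q₂ - p₂ * q₁ := by
    have := Nat.le_of_dvd (Nat.sub_pos_of_lt hlt') ((Nat.modEq_iff_dvd' hlt'.le).1 hmod.symm)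
    rw [← Nat.cast_mul, ← Nat.cast_mul, ← Nat.cast_sub hlt'.le]
    exact_mod_cast this
  have hden : (p₁ : ℝ) * q₁ ≤ 4 * S ^ 2 := by nlinarith
  calc (p₂ : ℝ) / p₁ + γ / (4 * S ^ 2) ≤ p₂ / p₁ + γ / (p₁ * q₁) := by gcongr
    _ ≤ p₂ / p₁ + (p₁ * q₂ - p₂ * q₁) / (p₁ * q₁) := by gcongr
    _ = q₂ / q₁ := by field_simp; ring

theorem card_mul_le_of_cross_modEq {S T γ : ℕ} {F : Finset (ℕ × ℕ)}
    (hbox : ∀ p ∈ F, dyadic p.1 S ∧ p.2 < 2 * T)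
    (hcop : ∀ p ∈ F, Nat.Coprime p.1 p.2)
    (hcross : ∀ p ∈ F, ∀ q ∈ F, p.1 * q.2 ≡ p.2 * q.1 [MOD γ]) :
    #F * γ ≤ 8 * S * T + γ := by
  rcases F.eq_empty_or_nonempty with rfl | hF
  · simp
  have hS : (0 : ℝ) < S := by
    obtain ⟨p, hp⟩ := hF
    have := (hbox p hp).1
    unfold dyadic at this
    exact_mod_cast (by omega : 0 < S)
  have hfst : ∀ p ∈ F, (S : ℝ) ≤ p.1 := fun p hp => by exact_mod_cast (hbox p hp).1.1
  let slope : ℕ × ℕ → ℝ := fun p => p.2 / p.1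
  have hinj : Set.InjOn slope F := fun p hp q hq h => by
    have hpq := (div_eq_div_iff (hS.trans_le (hfst p hp)).ne' (hS.trans_le (hfst q hq)).ne').1 h
    have hpq' : (p.1 : ℝ) * q.2 = q.1 * p.2 := by linarith
    obtain ⟨h₁, h₂⟩ := (hcop p hp).eq_of_mul_eq_mul (hcop q hq) (by exact_mod_cast hpq')
    exact Prod.ext h₁ h₂
  have hbound : ∀ y ∈ F.image slope, 0 ≤ y ∧ y ≤ 2 * T / S := forall_mem_image.2 fun q hq =>
    ⟨by positivity, div_le_div₀ (by positivity) (by exact_mod_cast (hbox q hq).2.le) hS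
      (hfst q hq)⟩
  obtain ⟨y, hy, hle⟩ := exists_add_card_sub_one_mul_le (hF.image slope)
    (fun y hy => (hbound y hy).1) <| forall_mem_image.2 fun p hp => forall_mem_image.2
      fun q hq => div_add_le_div_of_modEq (hbox p hp).1 (hbox q hq).1 (hcross p hp q hq)
  rw [card_image_of_injOn hinj, zero_add] at hle
  have hcard : ((#F : ℝ) - 1) * γ ≤ 8 * S * T := by
    have := hle.trans (hbound y hy).2
    rw [mul_div_assoc', div_le_div_iff₀ (by positivity) hS] at this
    nlinarith
  exact_mod_cast (by linarith : (#F : ℝ) * γ ≤ 8 * S * T + γ)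

theorem cross_mul_eq_of_isUnit {R : Type*} [CommRing R] {u v p q p' q' : R} (hu : IsUnit u)
    (h : u * p = v * q) (h' : u * p' = v * q') : p * q' = q * p' := by
  apply hu.mul_left_cancel
  linear_combination q' * h - q * h'

theorem card_mul_le_of_linear_congr {ι : Type*} {G : Finset ι} {π : ι → ℕ × ℕ}
    (hπ : Set.InjOn π G) {m S T : ℕ} {u v : ZMod m} (hu : IsUnit u)
    (hrel : ∀ t ∈ G, u * (π t).1 = v * (π t).2)
    (hbox : ∀ t ∈ G, dyadic (π t).1 S ∧ (π t).2 < 2 * T)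
    (hcop : ∀ t ∈ G, Nat.Coprime (π t).1 (π t).2) :
    #G * m ≤ 8 * S * T + m := by
  classical
  rw [← card_image_of_injOn hπ]
  refine card_mul_le_of_cross_modEq (forall_mem_image.2 hbox) (forall_mem_image.2 hcop) <|
    forall_mem_image.2 fun t ht => forall_mem_image.2 fun t' ht' => ?_
  rw [← ZMod.natCast_eq_natCast_iff]
  push_cast
  exact cross_mul_eq_of_isUnit hu (hrel t ht) (hrel t' ht')

theorem card_mul_max_le_of_linear {a b c X₁ Y₁ Z₁ : ℕ} {G : Finset (ℕ × ℕ × ℕ)}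
    (hbox : ∀ t ∈ G, dyadic t.1 X₁ ∧ dyadic t.2.1 Y₁ ∧ dyadic t.2.2 Z₁)
    (heq : ∀ t ∈ G, a * t.1 + b * t.2.1 = c * t.2.2)
    (hcop : ∀ t ∈ G, (a * t.1).Coprime (b * t.2.1) ∧ (a * t.1).Coprime (c * t.2.2) ∧
      (b * t.2.1).Coprime (c * t.2.2)) :
    #G * max (a * X₁) (max (b * Y₁) (c * Z₁)) ≤
      8 * (X₁ * Y₁ * Z₁) + max (a * X₁) (max (b * Y₁) (c * Z₁)) := by
  rcases G.eq_empty_or_nonempty with rfl | ⟨t₀, ht₀⟩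
  · simp
  obtain ⟨hab, hac, -⟩ := hcop t₀ ht₀
  have hmod : ∀ {m : ℕ}, ∀ t ∈ G,
      (a : ZMod m) * t.1 + (b : ZMod m) * t.2.1 = (c : ZMod m) * t.2.2 := fun t ht => by
    exact_mod_cast congrArg (Nat.cast : ℕ → ZMod _) (heq t ht)
  have hswap : ∀ t ∈ G, ∀ t' ∈ G,
      a * t.1 + b * t.2.1 + c * t'.2.2 = a * t'.1 + b * t'.2.1 + c * t.2.2 :=
    fun t ht t' ht' => by linarith [heq t ht, heq t' ht']
  have hA : #G * a ≤ 8 * Y₁ * Z₁ + a := by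
    rcases Nat.eq_zero_or_pos a with rfl | ha
    · simp
    refine card_mul_le_of_linear_congr (π := fun t => (t.2.1, t.2.2)) (u := (b : ZMod a)) (v := c)
      (fun t ht t' ht' h => ?_)
      ((ZMod.isUnit_iff_coprime b a).2 hab.symm.coprime_mul_right.coprime_mul_right_right)
      (fun t ht => by simpa [ZMod.natCast_self] using hmod (m := a) t ht)
      (fun t ht => ⟨(hbox t ht).2.1, (hbox t ht).2.2.2⟩)
      (fun t ht => (hcop t ht).2.2.coprime_mul_left.coprime_mul_left_right)
    obtain ⟨h₁, h₂⟩ := Prod.mk.inj h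
    have := hswap t ht t' ht'
    rw [h₁, h₂] at this
    exact Prod.ext (Nat.eq_of_mul_eq_mul_left ha (by omega)) (Prod.ext h₁ h₂)
  have hB : #G * b ≤ 8 * X₁ * Z₁ + b := by
    rcases Nat.eq_zero_or_pos b with rfl | hb
    · simp
    refine card_mul_le_of_linear_congr (π := fun t => (t.1, t.2.2)) (u := (a : ZMod b)) (v := c)
      (fun t ht t' ht' h => ?_)
      ((ZMod.isUnit_iff_coprime a b).2 hab.coprime_mul_right.coprime_mul_right_right)
      (fun t ht => by simpa [ZMod.natCast_self] using hmod (m := b) t ht)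
      (fun t ht => ⟨(hbox t ht).1, (hbox t ht).2.2.2⟩)
      (fun t ht => (hcop t ht).2.1.coprime_mul_left.coprime_mul_left_right)
    obtain ⟨h₁, h₂⟩ := Prod.mk.inj h
    have := hswap t ht t' ht'
    rw [h₁, h₂] at this
    exact Prod.ext h₁ (Prod.ext (Nat.eq_of_mul_eq_mul_left hb (by omega)) h₂)
  have hC : #G * c ≤ 8 * X₁ * Y₁ + c := by
    rcases Nat.eq_zero_or_pos c with rfl | hc
    · simp
    refine card_mul_le_of_linear_congr (π := fun t => (t.1, t.2.1)) (u := (a : ZMod c))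
      (v := -b) (fun t ht t' ht' h => ?_)
      ((ZMod.isUnit_iff_coprime a c).2 hac.coprime_mul_right.coprime_mul_right_right)
      (fun t ht => by
        simpa [ZMod.natCast_self, eq_neg_iff_add_eq_zero] using hmod (m := c) t ht)
      (fun t ht => ⟨(hbox t ht).1, (hbox t ht).2.1.2⟩)
      (fun t ht => (hcop t ht).1.coprime_mul_left.coprime_mul_left_right)
    obtain ⟨h₁, h₂⟩ := Prod.mk.inj h
    have := hswap t ht t' ht'
    rw [h₁, h₂] at this
    exact Prod.ext h₁ (Prod.ext h₂ (Nat.eq_of_mul_eq_mul_left hc (by omega)))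
  rcases max_cases (a * X₁) (max (b * Y₁) (c * Z₁)) with ⟨hM, -⟩ | ⟨hM, -⟩ <;> rw [hM]
  · nlinarith
  rcases max_cases (b * Y₁) (c * Z₁) with ⟨hM, -⟩ | ⟨hM, -⟩ <;> rw [hM] <;> nlinarith

theorem pairwise_coprime_of_add_eq {A B C A₀ B₀ C₀ n : ℕ} (h : A + B = C) (hA : A ∣ A₀ ^ n)
    (hB : B ∣ B₀ ^ n) (hC : C ∣ C₀ ^ n) (hg : Nat.gcd A₀ (Nat.gcd B₀ C₀) = 1) :
    A.Coprime B ∧ A.Coprime C ∧ B.Coprime C := by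
  have key : ∀ p, p.Prime → p ∣ A → p ∣ B → p ∣ C → False := fun p hp hpA hpB hpC =>
    hp.ne_one <| Nat.dvd_one.1 <| hg ▸ Nat.dvd_gcd (hp.dvd_of_dvd_pow (hpA.trans hA))
      (Nat.dvd_gcd (hp.dvd_of_dvd_pow (hpB.trans hB)) (hp.dvd_of_dvd_pow (hpC.trans hC)))
  exact ⟨Nat.coprime_of_dvd fun p hp hpA hpB => key p hp hpA hpB (h ▸ dvd_add hpA hpB),
    Nat.coprime_of_dvd fun p hp hpA hpC => key p hp hpA ((Nat.dvd_add_right hpA).1 (h ▸ hpC)) hpC,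
    Nat.coprime_of_dvd fun p hp hpB hpC => key p hp ((Nat.dvd_add_left hpB).1 (h ▸ hpC)) hpB hpC⟩

section

variable {d : ℕ}

-- The paper's `∏ᵢ xᵢ^i`, with the indices of `Fin d` shifted by one.
def weight (x : Fin d → ℕ) : ℕ := ∏ i, x i ^ (i.val + 1)

def dyadicBox (W : Fin d → ℕ) : Finset (Fin d → ℕ) :=
  Fintype.piFinset fun i => Ico (W i) (2 * W i)

theorem mem_dyadicBox {x W : Fin d → ℕ} : x ∈ dyadicBox W ↔ ∀ i, dyadic (x i) (W i) := by
  simp [dyadicBox, dyadic]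

theorem card_dyadicBox (W : Fin d → ℕ) : #(dyadicBox W) = ∏ i, W i := by
  simp only [dyadicBox, Fintype.card_piFinset, Nat.card_Ico]
  exact prod_congr rfl fun i _ => by omega

theorem weight_le_weight_of_mem_dyadicBox {x W : Fin d → ℕ} (hx : x ∈ dyadicBox W) :
    weight W ≤ weight x :=
  prod_le_prod' fun i _ => Nat.pow_le_pow_left (mem_dyadicBox.1 hx i).1 _

def solutions (c₁ c₂ c₃ : ℕ) (Xs Ys Zs : Fin d → ℕ) :
    Finset ((Fin d → ℕ) × (Fin d → ℕ) × (Fin d → ℕ)) :=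
  {t ∈ dyadicBox Xs ×ˢ dyadicBox Ys ×ˢ dyadicBox Zs |
    c₁ * weight t.1 + c₂ * weight t.2.1 = c₃ * weight t.2.2 ∧
    Nat.gcd (c₁ * ∏ i, t.1 i) (Nat.gcd (c₂ * ∏ i, t.2.1 i) (c₃ * ∏ i, t.2.2 i)) = 1}

theorem mem_solutions {c₁ c₂ c₃ : ℕ} {Xs Ys Zs : Fin d → ℕ}
    {t : (Fin d → ℕ) × (Fin d → ℕ) × (Fin d → ℕ)} :
    t ∈ solutions c₁ c₂ c₃ Xs Ys Zs ↔
      (∀ i, dyadic (t.1 i) (Xs i)) ∧ (∀ i, dyadic (t.2.1 i) (Ys i)) ∧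
      (∀ i, dyadic (t.2.2 i) (Zs i)) ∧
      c₁ * weight t.1 + c₂ * weight t.2.1 = c₃ * weight t.2.2 ∧
      Nat.gcd (c₁ * ∏ i, t.1 i) (Nat.gcd (c₂ * ∏ i, t.2.1 i) (c₃ * ∏ i, t.2.2 i)) = 1 := by
  rw [solutions, mem_filter, mem_product, mem_product, mem_dyadicBox, mem_dyadicBox,
    mem_dyadicBox]
  simp only [and_assoc]

theorem B_eq_card_solutions (c₁ c₂ c₃ : ℕ) (Xs Ys Zs : Fin d → ℕ) :
    B d c₁ c₂ c₃ Xs Ys Zs = #(solutions c₁ c₂ c₃ Xs Ys Zs) := by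
  rw [B, ← Nat.card_eq_finsetCard]
  exact Nat.card_congr <| Equiv.subtypeEquivRight fun t => mem_solutions.symm

theorem mul_weight_dvd_pow (hd : 0 < d) (c : ℕ) (x : Fin d → ℕ) :
    c * weight x ∣ (c * ∏ i, x i) ^ d := by
  rw [mul_pow, ← prod_pow]
  exact mul_dvd_mul (dvd_pow_self c hd.ne')
    (prod_dvd_prod_of_dvd _ _ fun i _ => pow_dvd_pow _ i.isLt)

variable (hd : 0 < d)

def resetHead (x : Fin d → ℕ) : Fin d → ℕ := Function.update x ⟨0, hd⟩ 1

def resetHeads :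
    (Fin d → ℕ) × (Fin d → ℕ) × (Fin d → ℕ) → (Fin d → ℕ) × (Fin d → ℕ) × (Fin d → ℕ) :=
  Prod.map (resetHead hd) (Prod.map (resetHead hd) (resetHead hd))

theorem mul_weight_resetHead_mul (c : ℕ) (x : Fin d → ℕ) :
    c * weight (resetHead hd x) * x ⟨0, hd⟩ = c * weight x := by
  rw [mul_assoc, mul_comm _ (x _)]
  congr 1
  symm
  rw [weight, weight, Fintype.prod_eq_mul_prod_compl ⟨0, hd⟩,
    Fintype.prod_eq_mul_prod_compl ⟨0, hd⟩ fun i => resetHead hd x i ^ (i.val + 1)]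
  simp only [resetHead, Function.update_self, zero_add, pow_one, one_mul]
  exact congrArg _ <| prod_congr rfl fun i hi => by
    rw [Function.update_of_ne (mem_compl.1 hi ∘ mem_singleton.2)]

theorem eq_of_resetHead_eq {x y : Fin d → ℕ} (h : resetHead hd x = resetHead hd y)
    (h₀ : x ⟨0, hd⟩ = y ⟨0, hd⟩) : x = y := by
  calc x = Function.update (resetHead hd x) ⟨0, hd⟩ (x ⟨0, hd⟩) := by simp [resetHead]
    _ = y := by rw [h, h₀]; simp [resetHead]

theorem card_image_resetHead_mul_le (W : Fin d → ℕ) :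
    #((dyadicBox W).image (resetHead hd)) * W ⟨0, hd⟩ ≤ ∏ i, W i := by
  rw [← card_dyadicBox, mul_comm]
  refine mul_card_image_le_card _ _ fun u hu => ?_
  obtain ⟨x, hx, rfl⟩ := mem_image.1 hu
  calc W ⟨0, hd⟩ = #((Ico (W ⟨0, hd⟩) (2 * W ⟨0, hd⟩)).image (Function.update x ⟨0, hd⟩)) := by
        rw [card_image_of_injective _ (Function.update_injective x _), Nat.card_Ico]; omega
    _ ≤ _ := card_le_card fun y hy => by
        obtain ⟨v, hv, rfl⟩ := mem_image.1 hy
        rw [mem_Ico] at hv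
        rw [mem_filter, mem_dyadicBox]
        exact ⟨(Function.forall_update_iff x (p := fun i y => dyadic y (W i))).2
          ⟨hv, fun i _ => mem_dyadicBox.1 hx i⟩, Function.update_idem _ _ _⟩

theorem card_fiber_mul_le (c₁ c₂ c₃ : ℕ) (Xs Ys Zs : Fin d → ℕ)
    (u : (Fin d → ℕ) × (Fin d → ℕ) × (Fin d → ℕ)) :
    #{t ∈ solutions c₁ c₂ c₃ Xs Ys Zs | resetHeads hd t = u} *
        max (c₁ * weight u.1 * Xs ⟨0, hd⟩)
          (max (c₂ * weight u.2.1 * Ys ⟨0, hd⟩) (c₃ * weight u.2.2 * Zs ⟨0, hd⟩)) ≤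
      8 * (Xs ⟨0, hd⟩ * Ys ⟨0, hd⟩ * Zs ⟨0, hd⟩) +
        max (c₁ * weight u.1 * Xs ⟨0, hd⟩)
          (max (c₂ * weight u.2.1 * Ys ⟨0, hd⟩) (c₃ * weight u.2.2 * Zs ⟨0, hd⟩)) := by
  let head : (Fin d → ℕ) × (Fin d → ℕ) × (Fin d → ℕ) → ℕ × ℕ × ℕ :=
    fun t => (t.1 ⟨0, hd⟩, t.2.1 ⟨0, hd⟩, t.2.2 ⟨0, hd⟩)
  have hinj : Set.InjOn head
      ({t ∈ solutions c₁ c₂ c₃ Xs Ys Zs | resetHeads hd t = u} : Finset _) := by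
    intro t ht t' ht' h
    have hr := (mem_filter.1 ht).2.trans (mem_filter.1 ht').2.symm
    simp only [resetHeads, Prod.map, Prod.mk.injEq] at hr
    simp only [head, Prod.mk.injEq] at h
    exact Prod.ext (eq_of_resetHead_eq hd hr.1 h.1)
      (Prod.ext (eq_of_resetHead_eq hd hr.2.1 h.2.1) (eq_of_resetHead_eq hd hr.2.2 h.2.2))
  rw [← card_image_of_injOn hinj]
  refine card_mul_max_le_of_linear ?_ ?_ ?_ <;> rw [forall_mem_image] <;> intro t ht <;>
    obtain ⟨ht, hu⟩ := mem_filter.1 ht <;> obtain ⟨hx, hy, hz, heq, hgcd⟩ := mem_solutions.1 ht <;>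
    simp only [← hu, head, resetHeads, Prod.map_fst, Prod.map_snd, mul_weight_resetHead_mul]
  · exact ⟨hx _, hy _, hz _⟩
  · exact heq
  · exact pairwise_coprime_of_add_eq heq (mul_weight_dvd_pow hd _ _) (mul_weight_dvd_pow hd _ _)
      (mul_weight_dvd_pow hd _ _) hgcd

theorem weight_le_two_mul {c : ℕ} (hc : 0 < c) {x W : Fin d → ℕ} (hx : x ∈ dyadicBox W) :
    weight W ≤ 2 * (c * weight (resetHead hd x) * W ⟨0, hd⟩) :=
  calc weight W ≤ c * weight x :=
        (weight_le_weight_of_mem_dyadicBox hx).trans (Nat.le_mul_of_pos_left _ hc)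
    _ = c * weight (resetHead hd x) * x ⟨0, hd⟩ := (mul_weight_resetHead_mul hd c x).symm
    _ ≤ c * weight (resetHead hd x) * (2 * W ⟨0, hd⟩) := by
      gcongr
      exact (mem_dyadicBox.1 hx _).2.le
    _ = 2 * (c * weight (resetHead hd x) * W ⟨0, hd⟩) := by ring

theorem card_solutions_le {c₁ c₂ c₃ : ℕ} (hc₁ : 0 < c₁) (hc₂ : 0 < c₂) (hc₃ : 0 < c₃)
    {Xs Ys Zs : Fin d → ℕ} {X : ℝ} (hX : 0 < X)
    (hXmax : X ≤ (max (weight Xs) (max (weight Ys) (weight Zs)) : ℕ)) :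
    (#(solutions c₁ c₂ c₃ Xs Ys Zs) : ℝ) ≤
      #((solutions c₁ c₂ c₃ Xs Ys Zs).image (resetHeads hd)) *
        (16 * (Xs ⟨0, hd⟩ * Ys ⟨0, hd⟩ * Zs ⟨0, hd⟩ : ℕ) / X + 1) := by
  rw [card_eq_sum_card_fiberwise fun t ht => mem_image_of_mem (resetHeads hd) ht, Nat.cast_sum,
    ← nsmul_eq_mul]
  refine sum_le_card_nsmul _ _ _ fun u hu => ?_
  obtain ⟨t, ht, rfl⟩ := mem_image.1 hu
  obtain ⟨hx, hy, hz, -⟩ := mem_solutions.1 ht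
  have hmax := max_le_max (weight_le_two_mul hd hc₁ (mem_dyadicBox.2 hx))
    (max_le_max (weight_le_two_mul hd hc₂ (mem_dyadicBox.2 hy))
      (weight_le_two_mul hd hc₃ (mem_dyadicBox.2 hz)))
  rw [Nat.mul_max_mul_left, Nat.mul_max_mul_left] at hmax
  have hfib := card_fiber_mul_le hd c₁ c₂ c₃ Xs Ys Zs (resetHeads hd t)
  set fib := {s ∈ solutions c₁ c₂ c₃ Xs Ys Zs | resetHeads hd s = resetHeads hd t}
  set M := max (c₁ * weight (resetHeads hd t).1 * Xs ⟨0, hd⟩)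
    (max (c₂ * weight (resetHeads hd t).2.1 * Ys ⟨0, hd⟩)
      (c₃ * weight (resetHeads hd t).2.2 * Zs ⟨0, hd⟩))
  have hXM : X ≤ 2 * M := hXmax.trans (by exact_mod_cast hmax)
  have hone : (1 : ℝ) ≤ #fib := Nat.one_le_cast.2 (card_pos.2 ⟨t, mem_filter.2 ⟨ht, rfl⟩⟩)
  replace hfib : (#fib : ℝ) * M ≤ 8 * (Xs ⟨0, hd⟩ * Ys ⟨0, hd⟩ * Zs ⟨0, hd⟩ : ℕ) + M := by
    exact_mod_cast hfib
  rw [div_add_one hX.ne', le_div_iff₀ hX]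
  nlinarith [mul_nonneg (sub_nonneg.2 hone) (sub_nonneg.2 hXM)]

theorem card_image_resetHeads_mul_le (c₁ c₂ c₃ : ℕ) (Xs Ys Zs : Fin d → ℕ) :
    #((solutions c₁ c₂ c₃ Xs Ys Zs).image (resetHeads hd)) *
        (Xs ⟨0, hd⟩ * Ys ⟨0, hd⟩ * Zs ⟨0, hd⟩) ≤ ∏ i, Xs i * Ys i * Zs i :=
  calc
    _ ≤ #((dyadicBox Xs ×ˢ dyadicBox Ys ×ˢ dyadicBox Zs).image (resetHeads hd)) *
          (Xs ⟨0, hd⟩ * Ys ⟨0, hd⟩ * Zs ⟨0, hd⟩) := by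
      gcongr
      exact filter_subset _ _
    _ = #((dyadicBox Xs).image (resetHead hd)) * Xs ⟨0, hd⟩ *
          (#((dyadicBox Ys).image (resetHead hd)) * Ys ⟨0, hd⟩ *
            (#((dyadicBox Zs).image (resetHead hd)) * Zs ⟨0, hd⟩)) := by
      rw [resetHeads, prodMap_image_product, prodMap_image_product, card_product, card_product]
      ring
    _ ≤ (∏ i, Xs i) * ((∏ i, Ys i) * ∏ i, Zs i) := by
      gcongr <;> exact card_image_resetHead_mul_le hd _
    _ = ∏ i, Xs i * Ys i * Zs i := by rw [prod_mul_distrib, prod_mul_distrib, mul_assoc]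

end

theorem geometry_of_numbers_bound (d : ℕ) (hd : 0 < d) :
    ∃ C : ℝ, ∀ (lam X : ℝ) (c₁ c₂ c₃ : ℕ) (Xs Ys Zs : Fin d → ℕ),
      0 < lam → 1 ≤ X → Admissible d lam X c₁ c₂ c₃ Xs Ys Zs →
      (B d c₁ c₂ c₃ Xs Ys Zs : ℝ) ≤
        C * (X ^ lam / ((Xs ⟨0, hd⟩ * Ys ⟨0, hd⟩ * Zs ⟨0, hd⟩ : ℕ) : ℝ)
          + X ^ (lam - 1)) := by
  refine ⟨32, fun lam X c₁ c₂ c₃ Xs Ys Zs _ hX hadm => ?_⟩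
  obtain ⟨hc₁, hc₂, hc₃, hXs, hYs, hZs, -, hPu, hXmax, -⟩ := hadm
  have hX₀ : 0 < X := one_pos.trans_le hX
  set P₁ := Xs ⟨0, hd⟩ * Ys ⟨0, hd⟩ * Zs ⟨0, hd⟩
  have hP₁ : (0 : ℝ) < P₁ := Nat.cast_pos.2 (Nat.mul_pos (Nat.mul_pos (hXs _) (hYs _)) (hZs _))
  set T := #((solutions c₁ c₂ c₃ Xs Ys Zs).image (resetHeads hd))
  have hTP : (T : ℝ) * P₁ ≤ 2 * X ^ lam :=
    le_trans (by exact_mod_cast card_image_resetHeads_mul_le hd c₁ c₂ c₃ Xs Ys Zs) hPu.le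
  have hT : (T : ℝ) ≤ 2 * X ^ lam / P₁ := (le_div_iff₀ hP₁).2 hTP
  have hXlam : 0 ≤ X ^ lam / P₁ := by positivity
  rw [B_eq_card_solutions, Real.rpow_sub_one hX₀.ne']
  calc (#(solutions c₁ c₂ c₃ Xs Ys Zs) : ℝ) ≤ T * (16 * P₁ / X + 1) :=
        card_solutions_le hd hc₁ hc₂ hc₃ hX₀ hXmax
    _ = 16 * (T * P₁) / X + T := by ring
    _ ≤ 16 * (2 * X ^ lam) / X + 2 * X ^ lam / P₁ := by gcongr
    _ = 32 * (X ^ lam / X) + 2 * (X ^ lam / P₁) := by ring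
    _ ≤ 32 * (X ^ lam / P₁ + X ^ lam / X) := by linarith
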